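/- arXiv:quant-ph/0206112 — 3 statements merged into one kernel-verified Lean document; each statement's English description precedes it below -/
import Mathlib

section
/- Let b > 0, c ∈ ℝ with 1 + bc ≥ 0, and φ ∈ ℝ. Every root k of b·k² + 2i·cos φ·√(1+bc)·k − c = 0 with Im k > 0 satisfies: k is purely imaginary, if and only if at least one of the following holds: (I) b·c·sin²φ ≤ cos²φ, or (II) b·c·sin²φ ≥ cos²φ and cos φ ≥ 0. -/
open Complex

/-- Every root of b k² + 2i cos φ √(1+bc) k - c = 0 in the open upper half plane is purely
imaginary iff (I) bc sin²φ ≤ cos²φ, or (II) bc sin²φ ≥ cos²φ and cos φ ≥ 0. -/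
theorem stmt5 (b c φ : ℝ) (hb : 0 < b) (hbc : 0 ≤ 1 + b * c) :
    (∀ k : ℂ,
      (b : ℂ) * k ^ 2 + 2 * I * (Real.cos φ : ℂ) * (Real.sqrt (1 + b * c) : ℂ) * k - (c : ℂ) = 0 →
        0 < k.im → k.re = 0) ↔
    (b * c * Real.sin φ ^ 2 ≤ Real.cos φ ^ 2 ∨
      (Real.cos φ ^ 2 ≤ b * c * Real.sin φ ^ 2 ∧ 0 ≤ Real.cos φ)) := by
  have hsc : Real.sin φ ^ 2 + Real.cos φ ^ 2 = 1 := Real.sin_sq_add_cos_sq φ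
  obtain ⟨s, hs0, hs2, hsdef⟩ : ∃ s : ℝ, 0 ≤ s ∧ s ^ 2 = 1 + b * c ∧ s = Real.sqrt (1 + b * c) :=
    ⟨Real.sqrt (1 + b * c), Real.sqrt_nonneg _, Real.sq_sqrt hbc, rfl⟩
  rw [← hsdef]
  constructor
  · intro h
    by_contra hR
    push_neg at hR
    obtain ⟨h1, h2⟩ := hR
    have hcos : Real.cos φ < 0 := h2 h1.le
    have hDpos : 0 < b * c * Real.sin φ ^ 2 - Real.cos φ ^ 2 := by linarith
    have hbc' : 0 < 1 + b * c := by nlinarith [sq_nonneg (Real.sin φ), sq_nonneg (Real.cos φ)]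
    have hspos : 0 < s := by rw [hsdef]; exact Real.sqrt_pos.mpr hbc'
    obtain ⟨x, hxpos, hx2⟩ :
        ∃ x : ℝ, 0 < x ∧ b ^ 2 * x ^ 2 = b * c * Real.sin φ ^ 2 - Real.cos φ ^ 2 := by
      refine ⟨Real.sqrt (b * c * Real.sin φ ^ 2 - Real.cos φ ^ 2) / b,
        div_pos (Real.sqrt_pos.mpr hDpos) hb, ?_⟩
      rw [div_pow, Real.sq_sqrt hDpos.le]
      field_simp
    obtain ⟨y, hypos, hby⟩ : ∃ y : ℝ, 0 < y ∧ b * y = -(Real.cos φ * s) := by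
      refine ⟨-(Real.cos φ * s) / b,
        div_pos (neg_pos.mpr (mul_neg_of_neg_of_pos hcos hspos)) hb, ?_⟩
      field_simp
    have hy2 : b ^ 2 * y ^ 2 = Real.cos φ ^ 2 * s ^ 2 := by
      have h' : (b * y) ^ 2 = (Real.cos φ * s) ^ 2 := by rw [hby]; ring
      linear_combination h'
    have hkre : ((x : ℂ) + (y : ℂ) * I).re = x := by simp
    have hkim : ((x : ℂ) + (y : ℂ) * I).im = y := by simp
    have heq : (b : ℂ) * ((x : ℂ) + (y : ℂ) * I) ^ 2 +
        2 * I * (Real.cos φ : ℂ) * (s : ℂ) * ((x : ℂ) + (y : ℂ) * I)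
        - (c : ℂ) = 0 := by
      rw [Complex.ext_iff]
      simp only [pow_two, Complex.mul_re, Complex.mul_im, Complex.add_re, Complex.add_im,
        Complex.sub_re, Complex.sub_im, Complex.ofReal_re, Complex.ofReal_im,
        Complex.I_re, Complex.I_im, Complex.zero_re, Complex.zero_im,
        Complex.re_ofNat, Complex.im_ofNat]
      constructor
      · refine mul_left_cancel₀ hb.ne' ?_
        linear_combination hx2 - hy2 - 2 * Real.cos φ * s * hby + Real.cos φ ^ 2 * hs2
          + b * c * hsc
      · linear_combination (2 * x) * hby
    have := h _ heq (by rw [hkim]; exact hypos)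
    rw [hkre] at this
    linarith
  · intro hR k hk him
    by_contra hre
    rw [Complex.ext_iff] at hk
    simp only [pow_two, Complex.mul_re, Complex.mul_im, Complex.add_re, Complex.add_im,
      Complex.sub_re, Complex.sub_im, Complex.ofReal_re, Complex.ofReal_im,
      Complex.I_re, Complex.I_im, Complex.zero_re, Complex.zero_im,
      Complex.re_ofNat, Complex.im_ofNat] at hk
    obtain ⟨h1, h2⟩ := hk
    have h2' : 2 * k.re * (b * k.im + Real.cos φ * s) = 0 := by linear_combination h2
    have hby : b * k.im + Real.cos φ * s = 0 := by
      rcases mul_eq_zero.mp h2' with h | h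
      · exact absurd (by linarith : k.re = 0) hre
      · exact h
    have hcsneg : Real.cos φ * s < 0 := by nlinarith
    have hcos : Real.cos φ < 0 := by
      by_contra hc
      push_neg at hc
      nlinarith [mul_nonneg hc hs0]
    have hDx : b ^ 2 * k.re ^ 2 = b * c * Real.sin φ ^ 2 - Real.cos φ ^ 2 := by
      linear_combination b * h1 + (b * k.im + Real.cos φ * s) * hby - Real.cos φ ^ 2 * hs2
        - b * c * hsc
    have hDpos : 0 < b * c * Real.sin φ ^ 2 - Real.cos φ ^ 2 := by
      rw [← hDx]
      have h' : k.re ^ 2 > 0 := by positivity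
      positivity
    rcases hR with h | ⟨_, h⟩
    · linarith
    · linarith
end

section
/- Let α, β, γ, δ ∈ ℂ with β ≠ 0. Both roots of the quadratic β·k² + i(α+δ)·k − γ = 0 are purely imaginary if and only if (α+δ)/β ∈ ℝ, γ/β ∈ ℝ, and 4γ/β ≤ (α+δ)²/β². -/
open Complex

/-- Both roots of β k² + i(α+δ) k - γ = 0 (β ≠ 0) are purely imaginary iff
(α+δ)/β ∈ ℝ, γ/β ∈ ℝ and 4γ/β ≤ ((α+δ)/β)². -/
theorem stmt8 (α β γ δ : ℂ) (hβ : β ≠ 0) (k₁ k₂ : ℂ)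
    (hroots : ∀ k : ℂ,
      β * k ^ 2 + I * (α + δ) * k - γ = β * (k - k₁) * (k - k₂)) :
    (k₁.re = 0 ∧ k₂.re = 0) ↔
      (((α + δ) / β).im = 0 ∧ (γ / β).im = 0 ∧
        (4 * γ / β).re ≤ (((α + δ) / β) ^ 2).re) := by
  have hsum : (α + δ) / β = I * (k₁ + k₂) := by
    field_simp
    linear_combination (-I) * ((hroots 1 - hroots (-1)) / 2) + (α + δ) * Complex.I_sq
  have hprod : γ / β = -(k₁ * k₂) := by
    field_simp
    linear_combination -(hroots 0)
  have h4 : 4 * γ / β = 4 * (γ / β) := by ring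
  rw [hsum, hprod, h4, hprod]
  obtain ⟨x, y⟩ := k₁
  obtain ⟨u, v⟩ := k₂
  simp only [Complex.mul_im, Complex.mul_re, Complex.add_re, Complex.add_im,
    Complex.I_re, Complex.I_im, Complex.neg_im, Complex.neg_re, pow_two,
    Complex.re_ofNat, Complex.im_ofNat]
  constructor
  · rintro ⟨h1, h2⟩
    subst h1; subst h2
    refine ⟨by ring, by ring, by nlinarith [sq_nonneg (y - v)]⟩
  · rintro ⟨h1, h2, h3⟩
    have hxu : u = -x := by linarith
    subst hxu
    have hx2 : x * (v - y) = 0 := by linear_combination -h2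
    have hineq : 4 * x ^ 2 ≤ (y - v) ^ 2 := by nlinarith [h3]
    have hx2sq : (x * (v - y)) ^ 2 = 0 := by rw [hx2]; ring
    have hx0 : x ^ 2 ≤ 0 := by nlinarith [hineq, hx2sq, sq_nonneg x]
    have hx : x = 0 := by nlinarith [sq_nonneg x]
    exact ⟨hx, by rw [hx]; ring⟩
end

section
/- Let k ∈ ℂ with Im k > 0, and let b ≥ 0, c ∈ ℝ with 1 + bc ≥ 0, θ, φ ∈ ℝ. Define ψ(x) = e^{iθ}(√(1+bc)·e^{iφ} − ikb)·e^{ikx} for x > 0 and ψ(x) = e^{-ikx} for x < 0. Then ψ ∈ L²(ℝ), ψ satisfies -ψ'' = k²ψ on ℝ \ {0}, and ψ satisfies the boundary conditions (ψ(+0), ψ'(+0))ᵀ = e^{iθ}·((√(1+bc)e^{iφ}, b), (c, √(1+bc)e^{-iφ}))·(ψ(-0), ψ'(-0))ᵀ if and only if k satisfies b·k² + 2i·cos φ·√(1+bc)·k − c = 0. -/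
/-!
On each half-line ψ is a multiple of `exp (c x)` with `c = ∓ i k`, so `ψ'' = c² ψ = -k² ψ`
there, and `Im k > 0` makes both pieces decay exponentially, hence square integrable.
The first boundary condition holds identically; the second, after cancelling `e^{iθ}`,
is the quadratic because `e^{iφ} + e^{-iφ} = 2 cos φ`.
-/

open Complex MeasureTheory Set Filter Topology

lemma hasDerivAt_const_mul_cexp_mul_ofReal (A c : ℂ) (x : ℝ) :
    HasDerivAt (fun y : ℝ => A * exp (c * y)) (c * (A * exp (c * x))) x := by
  have hlin : HasDerivAt (fun y : ℝ => c * (y : ℂ)) c x := by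
    simpa using ((hasDerivAt_id (x : ℂ)).const_mul c).comp_ofReal
  simpa [mul_comm, mul_left_comm] using hlin.cexp.const_mul A

lemma deriv_deriv_of_eventuallyEq_const_mul_cexp {f : ℝ → ℂ} {A c : ℂ} {x : ℝ}
    (hf : f =ᶠ[𝓝 x] fun y : ℝ => A * exp (c * y)) :
    deriv (deriv f) x = c ^ 2 * f x := by
  have hderiv :
      deriv (fun y : ℝ => A * exp (c * y)) = fun y : ℝ => (c * A) * exp (c * y) := by
    funext y
    rw [(hasDerivAt_const_mul_cexp_mul_ofReal A c y).deriv]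
    ring
  rw [hf.deriv.deriv_eq, hderiv, (hasDerivAt_const_mul_cexp_mul_ofReal (c * A) c x).deriv,
    hf.eq_of_nhds]
  ring

lemma deriv_deriv_piecewise_cexp {a b : ℂ} (hab : a ^ 2 = b ^ 2) (B : ℂ) {x : ℝ}
    (hx : x ≠ 0) :
    deriv (deriv fun y : ℝ => if y < 0 then exp (a * y) else B * exp (b * y)) x =
      a ^ 2 * (if x < 0 then exp (a * x) else B * exp (b * x)) := by
  rcases hx.lt_or_gt with hneg | hpos
  · refine deriv_deriv_of_eventuallyEq_const_mul_cexp (A := 1) ?_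
    filter_upwards [Iio_mem_nhds hneg] with y hy
    simp [mem_Iio.mp hy]
  · rw [hab]
    refine deriv_deriv_of_eventuallyEq_const_mul_cexp (A := B) ?_
    filter_upwards [Ioi_mem_nhds hpos] with y hy
    simp [not_lt.mpr (mem_Ioi.mp hy).le]

lemma memLp_two_cexp_mul_of_integrableOn {a : ℂ} {s : Set ℝ} (hs : MeasurableSet s)
    (h : IntegrableOn (fun x : ℝ => exp (2 * a * x)) s) :
    MemLp (fun x : ℝ => exp (a * x)) 2 (volume.restrict s) := by
  refine (memLp_two_iff_integrable_sq_norm (by fun_prop)).2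
    (IntegrableOn.congr_fun h.norm (fun x _ => ?_) hs)
  rw [← norm_pow, ← Complex.exp_nat_mul]
  push_cast
  ring_nf

lemma memLp_two_piecewise_cexp {a b : ℂ} (ha : 0 < a.re) (hb : b.re < 0) (B : ℂ) :
    MemLp (fun x : ℝ => if x < 0 then exp (a * x) else B * exp (b * x)) 2 volume := by
  have hleft : MemLp (fun x : ℝ => exp (a * x)) 2 (volume.restrict (Iio 0)) :=
    memLp_two_cexp_mul_of_integrableOn measurableSet_Iio
      ((integrableOn_exp_mul_complex_Iic (by simpa using ha) 0).mono_set Iio_subset_Iic_self)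
  have hright : MemLp (fun x : ℝ => exp (b * x)) 2 (volume.restrict (Iio 0)ᶜ) := by
    have h2b : (2 * b).re < 0 := by simpa using mul_neg_of_pos_of_neg two_pos hb
    rw [compl_Iio]
    exact memLp_two_cexp_mul_of_integrableOn measurableSet_Ici
      ((integrableOn_Ici_iff_integrableOn_Ioi).2 (integrableOn_exp_mul_complex_Ioi h2b 0))
  classical
  convert hleft.piecewise measurableSet_Iio (hright.const_mul B) using 1
  ext x
  simp [Set.piecewise]

lemma boundary_condition_iff_quadratic {E : ℂ} (hE : E ≠ 0) (s b c k w : ℂ) :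
    I * k * (E * (s * exp (w * I) - I * k * b))
        = E * (c * 1 + s * exp (-w * I) * (-(I * k))) ↔
      b * k ^ 2 + 2 * I * cos w * s * k - c = 0 := by
  constructor <;> intro h
  · have hcancel :
        I * k * (s * exp (w * I) - I * k * b) = c * 1 + s * exp (-w * I) * (-(I * k)) :=
      mul_left_cancel₀ hE (by linear_combination h)
    linear_combination hcancel + b * k ^ 2 * I_sq + I * s * k * two_cos w
  · linear_combination E * h - E * b * k ^ 2 * I_sq - E * I * s * k * two_cos w

theorem stmt12_general (k : ℂ) (hk : 0 < k.im) (b c θ φ : ℝ)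
    (ψ : ℝ → ℂ)
    (hψ : ψ = fun x : ℝ => if x < 0 then Complex.exp (-I * k * x)
      else Complex.exp ((θ : ℂ) * I)
        * ((Real.sqrt (1 + b * c) : ℂ) * Complex.exp ((φ : ℂ) * I) - I * k * b)
        * Complex.exp (I * k * x)) :
    MemLp ψ 2 volume ∧
    (∀ x : ℝ, x ≠ 0 → deriv (deriv ψ) x = -(k ^ 2) * ψ x) ∧
    ((Complex.exp ((θ : ℂ) * I)
          * ((Real.sqrt (1 + b * c) : ℂ) * Complex.exp ((φ : ℂ) * I) - I * k * b)
        = Complex.exp ((θ : ℂ) * I)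
          * ((Real.sqrt (1 + b * c) : ℂ) * Complex.exp ((φ : ℂ) * I) * 1
              + (b : ℂ) * (-(I * k))) ∧
      I * k * (Complex.exp ((θ : ℂ) * I)
          * ((Real.sqrt (1 + b * c) : ℂ) * Complex.exp ((φ : ℂ) * I) - I * k * b))
        = Complex.exp ((θ : ℂ) * I)
          * ((c : ℂ) * 1
              + (Real.sqrt (1 + b * c) : ℂ) * Complex.exp (-(φ : ℂ) * I) * (-(I * k)))) ↔
      (b : ℂ) * k ^ 2 + 2 * I * (Real.cos φ : ℂ) * (Real.sqrt (1 + b * c) : ℂ) * k - (c : ℂ)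
        = 0) := by
  subst hψ
  refine ⟨memLp_two_piecewise_cexp (by simpa using hk) (by simpa using hk) _,
    fun x hx => ?_, ?_⟩
  · have hsq : (-I * k) ^ 2 = -(k ^ 2) := by linear_combination k ^ 2 * I_sq
    rw [← hsq]
    exact deriv_deriv_piecewise_cexp (by ring) _ hx
  · rw [ofReal_cos, and_iff_right (by ring)]
    exact boundary_condition_iff_quadratic (exp_ne_zero _) _ _ _ _ _

/-- The Ansatz ψ(x) = e^{iθ}(√(1+bc)e^{iφ} - ikb)e^{ikx} for x > 0, ψ(x) = e^{-ikx} for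
x < 0 (Im k > 0) is square integrable, satisfies -ψ'' = k²ψ away from the origin, and
satisfies the connected PT boundary conditions iff b k² + 2i cos φ √(1+bc) k - c = 0. -/
theorem stmt12 (k : ℂ) (hk : 0 < k.im) (b c θ φ : ℝ) (hb : 0 ≤ b) (hbc : 0 ≤ 1 + b * c)
    (ψ : ℝ → ℂ)
    (hψ : ψ = fun x : ℝ => if x < 0 then Complex.exp (-I * k * x)
      else Complex.exp ((θ : ℂ) * I)
        * ((Real.sqrt (1 + b * c) : ℂ) * Complex.exp ((φ : ℂ) * I) - I * k * b)
        * Complex.exp (I * k * x)) :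
    MemLp ψ 2 volume ∧
    (∀ x : ℝ, x ≠ 0 → deriv (deriv ψ) x = -(k ^ 2) * ψ x) ∧
    ((Complex.exp ((θ : ℂ) * I)
          * ((Real.sqrt (1 + b * c) : ℂ) * Complex.exp ((φ : ℂ) * I) - I * k * b)
        = Complex.exp ((θ : ℂ) * I)
          * ((Real.sqrt (1 + b * c) : ℂ) * Complex.exp ((φ : ℂ) * I) * 1
              + (b : ℂ) * (-(I * k))) ∧
      I * k * (Complex.exp ((θ : ℂ) * I)
          * ((Real.sqrt (1 + b * c) : ℂ) * Complex.exp ((φ : ℂ) * I) - I * k * b))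
        = Complex.exp ((θ : ℂ) * I)
          * ((c : ℂ) * 1
              + (Real.sqrt (1 + b * c) : ℂ) * Complex.exp (-(φ : ℂ) * I) * (-(I * k)))) ↔
      (b : ℂ) * k ^ 2 + 2 * I * (Real.cos φ : ℂ) * (Real.sqrt (1 + b * c) : ℂ) * k - (c : ℂ)
        = 0) :=
  stmt12_general k hk b c θ φ ψ hψ
end
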